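/- arXiv:2510.14610 — 5 statements merged into one kernel-verified Lean document; each statement's English description precedes it below -/
import Mathlib

section
/- The bilinear product ∆_{(α,β)} is a left-symmetric structure on T*g, i.e., it satisfies x∆(y∆z) − (x∆y)∆z = y∆(x∆z) − (y∆x)∆z and x∆y − y∆x = [x,y] for all x, y, z ∈ T*g. -/
namespace Paper

open Finset

/-- Index type for the basis {z, e_1,…,e_n, f_1,…,f_n, t} of the cotangent Lie algebra
`T*g` of `g = ℝ ⋉_{J_n(0)} ℝ^n`.  The constructor `Bas.e i` (with `i : Fin n`)
represents the basis vector `e_{i+1}` (math indexing `1,…,n`), similarly `Bas.f i`. -/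
inductive Bas (n : ℕ) : Type
  | z : Bas n
  | t : Bas n
  | e : Fin n → Bas n
  | f : Fin n → Bas n
  deriving DecidableEq

/-- The underlying vector space of `T*g`, as coordinate functions on the basis. -/
abbrev V (n : ℕ) : Type := Bas n → ℝ

/-- The basis vectors of `T*g`. -/
noncomputable def bas (n : ℕ) (b : Bas n) : V n := Pi.single b 1

/-- The Lie bracket of `T*g`: the bilinear extension of
`[t, e_{i+1}] = e_i`, `[t, f_{i+1}] = -f_i`, `[e_{i+1}, f_{n-i+1}] = z` for `i = 1,…,n-1`
(math indexing), all other brackets of basis vectors being zero. -/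
noncomputable def bracket (n : ℕ) (x y : V n) : V n := fun b =>
  match b with
  | Bas.z => ∑ i : Fin n, ∑ j : Fin n,
      (if (i : ℕ) + (j : ℕ) = n then
        x (Bas.e i) * y (Bas.f j) - x (Bas.f j) * y (Bas.e i) else 0)
  | Bas.t => 0
  | Bas.e k => if h : (k : ℕ) + 1 < n then
      x Bas.t * y (Bas.e ⟨(k : ℕ) + 1, h⟩) - x (Bas.e ⟨(k : ℕ) + 1, h⟩) * y Bas.t else 0
  | Bas.f k => if h : (k : ℕ) + 1 < n then
      -(x Bas.t * y (Bas.f ⟨(k : ℕ) + 1, h⟩)) + x (Bas.f ⟨(k : ℕ) + 1, h⟩) * y Bas.t else 0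

/-- `αseq α i = α_i = (i(α-1)+1)/((α-1)(i-1)+1)`. -/
noncomputable def αseq (α : ℝ) (i : ℕ) : ℝ :=
  ((i : ℝ) * (α - 1) + 1) / ((α - 1) * ((i : ℝ) - 1) + 1)

/-- `βseq β i = β_i = (i(β+1)-1)/(-(β+1)(i-1)+1)`. -/
noncomputable def βseq (β : ℝ) (i : ℕ) : ℝ :=
  ((i : ℝ) * (β + 1) - 1) / (-(β + 1) * ((i : ℝ) - 1) + 1)

/-- `γseq n α β i = γ_i = (α-1)((n-i)(β+1)-1)/(n(α-1)(β+1)-(α-1)+β+1)`. -/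
noncomputable def γseq (n : ℕ) (α β : ℝ) (i : ℕ) : ℝ :=
  ((α - 1) * (((n : ℝ) - (i : ℝ)) * (β + 1) - 1)) /
    ((n : ℝ) * (α - 1) * (β + 1) - (α - 1) + β + 1)

/-- The standing conditions on `α, β`:
`k(α-1)+1 ≠ 0` and `k(β+1)-1 ≠ 0` for all integers `k ≥ 1`, and
`n(α-1)(β+1) - α + β + 2 ≠ 0`. -/
def Cond (n : ℕ) (α β : ℝ) : Prop :=
  (∀ k : ℕ, 1 ≤ k → (k : ℝ) * (α - 1) + 1 ≠ 0) ∧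
  (∀ k : ℕ, 1 ≤ k → (k : ℝ) * (β + 1) - 1 ≠ 0) ∧
  (n : ℝ) * (α - 1) * (β + 1) - α + β + 2 ≠ 0

/-- The product `∆_{(α,β)}` on `T*g`: the bilinear extension of
`t ∆ e_{i+1} = α_i e_i`, `e_{i+1} ∆ t = (α_i - 1) e_i`, `t ∆ f_{i+1} = β_i f_i`,
`f_{i+1} ∆ t = (β_i + 1) f_i`, `e_{i+1} ∆ f_{n-i+1} = γ_i z`,
`f_{n-i+1} ∆ e_{i+1} = (γ_i - 1) z` for `i = 1,…,n-1` (math indexing),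
all other products of basis vectors being zero. -/
noncomputable def lsa (n : ℕ) (α β : ℝ) (x y : V n) : V n := fun b =>
  match b with
  | Bas.z => ∑ i : Fin n, ∑ j : Fin n,
      (if (i : ℕ) + (j : ℕ) = n then
        γseq n α β (i : ℕ) * (x (Bas.e i) * y (Bas.f j))
          + (γseq n α β (i : ℕ) - 1) * (x (Bas.f j) * y (Bas.e i))
      else 0)
  | Bas.t => 0
  | Bas.e k => if h : (k : ℕ) + 1 < n then
      αseq α ((k : ℕ) + 1) * (x Bas.t * y (Bas.e ⟨(k : ℕ) + 1, h⟩))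
        + (αseq α ((k : ℕ) + 1) - 1) * (x (Bas.e ⟨(k : ℕ) + 1, h⟩) * y Bas.t)
      else 0
  | Bas.f k => if h : (k : ℕ) + 1 < n then
      βseq β ((k : ℕ) + 1) * (x Bas.t * y (Bas.f ⟨(k : ℕ) + 1, h⟩))
        + (βseq β ((k : ℕ) + 1) + 1) * (x (Bas.f ⟨(k : ℕ) + 1, h⟩) * y Bas.t)
      else 0

/-- `D` is a left-symmetric structure on `T*g`: the associator is symmetric in the
first two arguments and `x∆y - y∆x = [x,y]`. -/
def IsLSA (n : ℕ) (D : V n → V n → V n) : Prop :=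
  (∀ x y z : V n, D x (D y z) - D (D x y) z = D y (D x z) - D (D y x) z) ∧
  (∀ x y : V n, D x y - D y x = bracket n x y)

/-- Completeness: every right translation `y ↦ y ∆ x` is nilpotent. -/
def IsComplete (n : ℕ) (D : V n → V n → V n) : Prop :=
  ∀ x : V n, ∃ m : ℕ, ∀ y : V n, (fun w => D w x)^[m] y = 0

/-- Bilinearity of a product. -/
def IsBilin (n : ℕ) (D : V n → V n → V n) : Prop :=
  (∀ (c : ℝ) (x x' y : V n), D (c • x + x') y = c • D x y + D x' y) ∧
  (∀ (c : ℝ) (x y y' : V n), D x (c • y + y') = c • D x y + D x y')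

/-- Two left-symmetric structures on `T*g` are isomorphic if some Lie algebra
automorphism of `T*g` intertwines the products. -/
def LSAIso (n : ℕ) (D D' : V n → V n → V n) : Prop :=
  ∃ φ : V n ≃ₗ[ℝ] V n,
    (∀ x y, φ (bracket n x y) = bracket n (φ x) (φ y)) ∧
    (∀ x y, φ (D x y) = D' (φ x) (φ y))

/-- The 2-form `ω_λ = t* ∧ z* + ∑ λ_i e_i* ∧ f_{n-i+1}*` with `λ_i = λ - i + 1`. -/
noncomputable def omegaForm (n : ℕ) (lam : ℝ) (x y : V n) : ℝ :=
  (x Bas.t * y Bas.z - x Bas.z * y Bas.t) +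
  ∑ i : Fin n, (lam - ((i : ℕ) : ℝ)) *
    (x (Bas.e i) * y (Bas.f ⟨n - 1 - (i : ℕ), by have := i.isLt; omega⟩)
      - x (Bas.f ⟨n - 1 - (i : ℕ), by have := i.isLt; omega⟩) * y (Bas.e i))

/-- Two symplectic forms on `T*g` are symplectomorphic up to homothety if some Lie
algebra automorphism pulls one back to a nonzero multiple of the other. -/
def SympIso (n : ℕ) (ω ω' : V n → V n → ℝ) : Prop :=
  ∃ φ : V n ≃ₗ[ℝ] V n,
    (∀ x y, φ (bracket n x y) = bracket n (φ x) (φ y)) ∧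
    ∃ c : ℝ, c ≠ 0 ∧ ∀ x y, ω' (φ x) (φ y) = c * ω x y

/-- `ω` is a symplectic structure on `T*g`. -/
def IsSymplectic (n : ℕ) (ω : V n → V n → ℝ) : Prop :=
  (∀ (c : ℝ) (x x' y : V n), ω (c • x + x') y = c * ω x y + ω x' y) ∧
  (∀ x y : V n, ω x y = - ω y x) ∧
  (∀ x : V n, (∀ y, ω x y = 0) → x = 0) ∧
  (∀ x y z : V n, ω x (bracket n y z) + ω y (bracket n z x) + ω z (bracket n x y) = 0)

/-!
Everything is checked coordinatewise, after extending the `e`- and `f`-coordinates by zero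
beyond `n` so that the formulas for `∆` have no boundary cases. In the `e`- and `f`-coordinates
left-symmetry amounts to the recurrences `α_i (α_{i+1} - 1) = α_i - 1` and
`β_i (β_{i+1} + 1) + β_i + 1 = 0`. In the `z`-coordinate, after half of the terms are shifted
along the antidiagonal, the coefficients are `γ_{a+1} β_{b+1} + γ_a`,
`(γ_a - 1) α_{a+1} - (γ_{a+1} - 1)` and `γ_{a+1} (β_{b+1} + 1) - (γ_a - 1) (α_{a+1} - 1)` with
`a + b + 1 = n`. They vanish because, over the common denominator, `γ_a` is affine in `n - a`
and `γ_a - 1` is affine in `a`.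
-/

theorem sum_fin_ite_add_eq_sum_antidiagonal {M : Type*} [AddCommMonoid M] (n : ℕ) (g : ℕ → ℕ → M)
    (h₀ : g 0 n = 0) (h₁ : g n 0 = 0) :
    ∑ i : Fin n, ∑ j : Fin n, (if (i : ℕ) + (j : ℕ) = n then g i j else 0) =
      ∑ p ∈ antidiagonal n, g p.1 p.2 := by
  have inner (i : ℕ) : ∑ j : Fin n, (if i + (j : ℕ) = n then g i j else 0) =
      ∑ j ∈ range n, if i + j = n then g i j else 0 :=
    Fin.sum_univ_eq_sum_range (fun j => if i + j = n then g i j else 0) n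
  simp only [inner]
  rw [Fin.sum_univ_eq_sum_range (fun i => ∑ j ∈ range n, if i + j = n then g i j else 0) n]
  rw [← sum_product', ← sum_filter]
  refine sum_subset (fun p hp => ?_) (fun p hp hp' => ?_)
  · simp only [mem_filter, mem_product, mem_range] at hp
    exact HasAntidiagonal.mem_antidiagonal.2 hp.2
  · simp only [mem_filter, mem_product, mem_range, HasAntidiagonal.mem_antidiagonal, not_and] at hp hp'
    obtain ⟨a, b⟩ := p
    dsimp only at hp hp' ⊢
    rcases Nat.eq_zero_or_pos a with rfl | ha
    · obtain rfl : b = n := by omega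
      exact h₀
    · obtain ⟨rfl, rfl⟩ : b = 0 ∧ a = n := by omega
      exact h₁

theorem sum_antidiagonal_succ_add {M : Type*} [AddCommMonoid M] (A B : ℕ → ℕ → M) (m : ℕ) :
    ∑ p ∈ antidiagonal (m + 1), (A p.1 p.2 + B p.1 p.2) =
      A 0 (m + 1) + B (m + 1) 0 + ∑ p ∈ antidiagonal m, (A (p.1 + 1) p.2 + B p.1 (p.2 + 1)) := by
  rw [sum_add_distrib, Nat.sum_antidiagonal_succ, Nat.sum_antidiagonal_succ', sum_add_distrib]
  abel

section Coordinates

variable {n : ℕ}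

noncomputable def ecoord (x : V n) (k : ℕ) : ℝ := if h : k < n then x (Bas.e ⟨k, h⟩) else 0

noncomputable def fcoord (x : V n) (k : ℕ) : ℝ := if h : k < n then x (Bas.f ⟨k, h⟩) else 0

@[simp]
theorem ecoord_val (x : V n) (k : Fin n) : ecoord x k = x (Bas.e k) := dif_pos k.isLt

@[simp]
theorem fcoord_val (x : V n) (k : Fin n) : fcoord x k = x (Bas.f k) := dif_pos k.isLt

theorem ecoord_of_le (x : V n) {k : ℕ} (hk : n ≤ k) : ecoord x k = 0 := dif_neg (by omega)

theorem fcoord_of_le (x : V n) {k : ℕ} (hk : n ≤ k) : fcoord x k = 0 := dif_neg (by omega)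

end Coordinates

section Product

variable {n : ℕ} {α β : ℝ}

theorem lsa_apply_t (x y : V n) : lsa n α β x y Bas.t = 0 := rfl

theorem ecoord_lsa (x y : V n) (k : ℕ) :
    ecoord (lsa n α β x y) k = αseq α (k + 1) * (x Bas.t * ecoord y (k + 1))
      + (αseq α (k + 1) - 1) * (ecoord x (k + 1) * y Bas.t) := by
  by_cases hk : k + 1 < n
  · simp [ecoord, lsa, hk, Nat.lt_of_succ_lt hk]
  · simp [ecoord, lsa, hk]

theorem fcoord_lsa (x y : V n) (k : ℕ) :
    fcoord (lsa n α β x y) k = βseq β (k + 1) * (x Bas.t * fcoord y (k + 1))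
      + (βseq β (k + 1) + 1) * (fcoord x (k + 1) * y Bas.t) := by
  by_cases hk : k + 1 < n
  · simp [fcoord, lsa, hk, Nat.lt_of_succ_lt hk]
  · simp [fcoord, lsa, hk]

theorem lsa_apply_z (x y : V n) :
    lsa n α β x y Bas.z = ∑ p ∈ antidiagonal n,
      (γseq n α β p.1 * (ecoord x p.1 * fcoord y p.2)
        + (γseq n α β p.1 - 1) * (fcoord x p.2 * ecoord y p.1)) := by
  simp only [lsa, ← ecoord_val, ← fcoord_val]
  exact sum_fin_ite_add_eq_sum_antidiagonal n (fun i j => γseq n α β i * (ecoord x i * fcoord y j)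
    + (γseq n α β i - 1) * (fcoord x j * ecoord y i)) (by simp [fcoord_of_le]) (by simp [ecoord_of_le])

theorem lsa_sub_lsa_swap (x y : V n) : lsa n α β x y - lsa n α β y x = bracket n x y := by
  funext b
  cases b with
  | z =>
    simp only [Pi.sub_apply, lsa, bracket, ← sum_sub_distrib]
    refine sum_congr rfl fun i _ => sum_congr rfl fun j _ => ?_
    split_ifs <;> ring
  | t => simp [lsa, bracket]
  | e k =>
    simp only [Pi.sub_apply, lsa, bracket]
    split_ifs <;> ring
  | f k =>
    simp only [Pi.sub_apply, lsa, bracket]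
    split_ifs <;> ring

end Product

section Sequences

variable {α β : ℝ}

theorem αseq_succ (k : ℕ) :
    αseq α (k + 1) = (((k : ℝ) + 1) * (α - 1) + 1) / ((k : ℝ) * (α - 1) + 1) := by
  rw [αseq]
  push_cast
  ring_nf

theorem αseq_succ_sub_one {k : ℕ} (h : (k : ℝ) * (α - 1) + 1 ≠ 0) :
    αseq α (k + 1) - 1 = (α - 1) / ((k : ℝ) * (α - 1) + 1) := by
  rw [αseq_succ, div_sub_one h]
  ring

theorem βseq_succ (k : ℕ) :
    βseq β (k + 1) = -((((k : ℝ) + 1) * (β + 1) - 1) / ((k : ℝ) * (β + 1) - 1)) := by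
  rw [βseq, ← div_neg]
  push_cast
  ring_nf

theorem βseq_succ_add_one {k : ℕ} (h : (k : ℝ) * (β + 1) - 1 ≠ 0) :
    βseq β (k + 1) + 1 = -((β + 1) / ((k : ℝ) * (β + 1) - 1)) := by
  rw [βseq_succ, neg_add_eq_sub, one_sub_div h, ← neg_div]
  ring

theorem γseq_of_add_eq {n i j : ℕ} (h : i + j = n) :
    γseq n α β i = (α - 1) * ((j : ℝ) * (β + 1) - 1)
      / ((n : ℝ) * (α - 1) * (β + 1) - (α - 1) + β + 1) := by
  rw [γseq, ← h]
  push_cast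
  ring_nf

theorem γseq_sub_one_of_add_eq {n i j : ℕ} (h : i + j = n)
    (hN : (n : ℝ) * (α - 1) * (β + 1) - (α - 1) + β + 1 ≠ 0) :
    γseq n α β i - 1 = -((β + 1) * ((i : ℝ) * (α - 1) + 1)
      / ((n : ℝ) * (α - 1) * (β + 1) - (α - 1) + β + 1)) := by
  rw [γseq_of_add_eq h, div_sub_one hN, ← neg_div]
  congr 1
  rw [← h]
  push_cast
  ring

theorem αseq_mul_αseq_succ_sub_one {k : ℕ} (h₀ : (k : ℝ) * (α - 1) + 1 ≠ 0)
    (h₁ : ((k : ℝ) + 1) * (α - 1) + 1 ≠ 0) :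
    αseq α (k + 1) * (αseq α (k + 2) - 1) = αseq α (k + 1) - 1 := by
  rw [αseq_succ, αseq_succ]
  push_cast
  field_simp
  ring

theorem βseq_mul_βseq_succ_add_one {k : ℕ} (h₀ : (k : ℝ) * (β + 1) - 1 ≠ 0)
    (h₁ : ((k : ℝ) + 1) * (β + 1) - 1 ≠ 0) :
    βseq β (k + 1) * (βseq β (k + 2) + 1) + (βseq β (k + 1) + 1) = 0 := by
  rw [βseq_succ, βseq_succ]
  push_cast
  field_simp
  ring

theorem γseq_succ_mul_βseq_add_γseq {n i j : ℕ} (h : i + 1 + j = n)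
    (hβ : (j : ℝ) * (β + 1) - 1 ≠ 0) :
    γseq n α β (i + 1) * βseq β (j + 1) + γseq n α β i = 0 := by
  rw [γseq_of_add_eq h, γseq_of_add_eq (show i + (j + 1) = n by omega), βseq_succ]
  push_cast
  field_simp
  ring

theorem γseq_sub_one_mul_αseq {n i j : ℕ} (h : i + 1 + j = n)
    (hα : (i : ℝ) * (α - 1) + 1 ≠ 0) (hN : (n : ℝ) * (α - 1) * (β + 1) - (α - 1) + β + 1 ≠ 0) :
    (γseq n α β i - 1) * αseq α (i + 1) = γseq n α β (i + 1) - 1 := by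
  rw [γseq_sub_one_of_add_eq (show i + (j + 1) = n by omega) hN, γseq_sub_one_of_add_eq h hN,
    αseq_succ]
  push_cast
  field_simp

theorem γseq_succ_mul_βseq_add_one {n i j : ℕ} (h : i + 1 + j = n)
    (hα : (i : ℝ) * (α - 1) + 1 ≠ 0) (hβ : (j : ℝ) * (β + 1) - 1 ≠ 0)
    (hN : (n : ℝ) * (α - 1) * (β + 1) - (α - 1) + β + 1 ≠ 0) :
    γseq n α β (i + 1) * (βseq β (j + 1) + 1) = (γseq n α β i - 1) * (αseq α (i + 1) - 1) := by
  rw [γseq_of_add_eq h, γseq_sub_one_of_add_eq (show i + (j + 1) = n by omega) hN,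
    βseq_succ_add_one hβ, αseq_succ_sub_one hα]
  field_simp
  rw [mul_div_mul_right _ _ (by rwa [mul_comm])]

end Sequences

section LeftSymmetry

variable {n : ℕ} {α β : ℝ}

theorem lsa_assoc_symm_e (hα : ∀ k : ℕ, (k : ℝ) * (α - 1) + 1 ≠ 0) (x y z : V n) (k : Fin n) :
    (lsa n α β x (lsa n α β y z) - lsa n α β (lsa n α β x y) z) (Bas.e k) =
      (lsa n α β y (lsa n α β x z) - lsa n α β (lsa n α β y x) z) (Bas.e k) := by
  simp only [Pi.sub_apply]
  simp only [← ecoord_val, ecoord_lsa, lsa_apply_t]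
  linear_combination (z Bas.t * (x Bas.t * ecoord y (k + 2) - ecoord x (k + 2) * y Bas.t)) *
    αseq_mul_αseq_succ_sub_one (hα k) (by exact_mod_cast hα (k + 1))

theorem lsa_assoc_symm_f (hβ : ∀ k : ℕ, (k : ℝ) * (β + 1) - 1 ≠ 0) (x y z : V n) (k : Fin n) :
    (lsa n α β x (lsa n α β y z) - lsa n α β (lsa n α β x y) z) (Bas.f k) =
      (lsa n α β y (lsa n α β x z) - lsa n α β (lsa n α β y x) z) (Bas.f k) := by
  simp only [Pi.sub_apply]
  simp only [← fcoord_val, fcoord_lsa, lsa_apply_t]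
  linear_combination (z Bas.t * (x Bas.t * fcoord y (k + 2) - fcoord x (k + 2) * y Bas.t)) *
    βseq_mul_βseq_succ_add_one (hβ k) (by exact_mod_cast hβ (k + 1))

theorem lsa_assoc_symm_z (hα : ∀ k : ℕ, (k : ℝ) * (α - 1) + 1 ≠ 0)
    (hβ : ∀ k : ℕ, (k : ℝ) * (β + 1) - 1 ≠ 0)
    (hN : (n : ℝ) * (α - 1) * (β + 1) - (α - 1) + β + 1 ≠ 0) (x y z : V n) :
    (lsa n α β x (lsa n α β y z) - lsa n α β (lsa n α β x y) z) Bas.z =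
      (lsa n α β y (lsa n α β x z) - lsa n α β (lsa n α β y x) z) Bas.z := by
  rw [← sub_eq_zero]
  simp only [Pi.sub_apply, lsa_apply_z, ecoord_lsa, fcoord_lsa, ← sum_sub_distrib]
  obtain _ | m := n
  · simp [ecoord_of_le]
  -- `A i j` and `B i j` collect the terms of the `(i, j)`-th summand supported on the pairs
  -- `(i, j + 1)` and `(i + 1, j)`, respectively.
  let M₁ (a b : ℕ) := (ecoord x a * y Bas.t - x Bas.t * ecoord y a) * fcoord z b
  let M₂ (a b : ℕ) := (x Bas.t * fcoord y b - fcoord x b * y Bas.t) * ecoord z a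
  let M₃ (a b : ℕ) := (ecoord x a * fcoord y b - fcoord x b * ecoord y a) * z Bas.t
  let γ := γseq (m + 1) α β
  let A (i j : ℕ) := γ i * βseq β (j + 1) * M₁ i (j + 1) + (γ i - 1) * M₂ i (j + 1)
    + γ i * (βseq β (j + 1) + 1) * M₃ i (j + 1)
  let B (i j : ℕ) := γ i * M₁ (i + 1) j - (γ i - 1) * αseq α (i + 1) * M₂ (i + 1) j
    - (γ i - 1) * (αseq α (i + 1) - 1) * M₃ (i + 1) j
  calc _ = ∑ p ∈ antidiagonal (m + 1), (A p.1 p.2 + B p.1 p.2) :=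
        sum_congr rfl fun p _ => by simp only [A, B, M₁, M₂, M₃, γ]; ring
    _ = A 0 (m + 1) + B (m + 1) 0 + ∑ p ∈ antidiagonal m, (A (p.1 + 1) p.2 + B p.1 (p.2 + 1)) :=
        sum_antidiagonal_succ_add A B m
    _ = 0 := by
      have hA : A 0 (m + 1) = 0 := by simp [A, M₁, M₂, M₃, fcoord_of_le]
      have hB : B (m + 1) 0 = 0 := by simp [B, M₁, M₂, M₃, ecoord_of_le]
      rw [hA, hB, zero_add, zero_add]
      refine sum_eq_zero fun p hp => ?_
      have h : p.1 + 1 + p.2 = m + 1 := by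
        rw [add_right_comm, HasAntidiagonal.mem_antidiagonal.1 hp]
      linear_combination M₁ (p.1 + 1) (p.2 + 1) * γseq_succ_mul_βseq_add_γseq h (hβ p.2)
        - M₂ (p.1 + 1) (p.2 + 1) * γseq_sub_one_mul_αseq h (hα p.1) hN
        + M₃ (p.1 + 1) (p.2 + 1) * γseq_succ_mul_βseq_add_one h (hα p.1) (hβ p.2) hN

end LeftSymmetry

theorem Cond.natCast_mul_add_one_ne_zero {n : ℕ} {α β : ℝ} (hc : Cond n α β) (k : ℕ) :
    (k : ℝ) * (α - 1) + 1 ≠ 0 := by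
  rcases k with _ | k
  · simp
  · exact hc.1 (k + 1) (Nat.le_add_left 1 k)

theorem Cond.natCast_mul_sub_one_ne_zero {n : ℕ} {α β : ℝ} (hc : Cond n α β) (k : ℕ) :
    (k : ℝ) * (β + 1) - 1 ≠ 0 := by
  rcases k with _ | k
  · simp
  · exact hc.2.1 (k + 1) (Nat.le_add_left 1 k)

theorem Cond.denom_ne_zero {n : ℕ} {α β : ℝ} (hc : Cond n α β) :
    (n : ℝ) * (α - 1) * (β + 1) - (α - 1) + β + 1 ≠ 0 := by
  convert hc.2.2 using 1
  ring

theorem stmt0_general (n : ℕ) (α β : ℝ) (hc : Cond n α β) :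
    IsLSA n (lsa n α β) := by
  refine ⟨fun x y z => funext fun b => ?_, lsa_sub_lsa_swap⟩
  cases b with
  | z =>
    exact lsa_assoc_symm_z hc.natCast_mul_add_one_ne_zero hc.natCast_mul_sub_one_ne_zero
      hc.denom_ne_zero x y z
  | t => rfl
  | e k => exact lsa_assoc_symm_e hc.natCast_mul_add_one_ne_zero x y z k
  | f k => exact lsa_assoc_symm_f hc.natCast_mul_sub_one_ne_zero x y z k

/-- `∆_{(α,β)}` is a left-symmetric structure on `T*g`. -/
theorem stmt0 (n : ℕ) (hn : 2 ≤ n) (α β : ℝ) (hc : Cond n α β) :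
    IsLSA n (lsa n α β) :=
  stmt0_general n α β hc

end Paper
end

section
/- The left-symmetric structure ∆_{(α,β)} on T*g is complete: for every x ∈ T*g the right translation map r_x : y ↦ y ∆_{(α,β)} x is a nilpotent endomorphism of T*g. -/
namespace Paper

open Finset

/-- the left-symmetric structure `∆_{(α,β)}` on `T*g` is complete:
every right translation `y ↦ y ∆ x` is nilpotent. -/
theorem stmt1 (n : ℕ) (hn : 2 ≤ n) (α β : ℝ) (hc : Cond n α β) :
    IsComplete n (lsa n α β) := by
  intro x
  set r : V n → V n := fun w => lsa n α β w x with hr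
  -- Invariant: after s+1 applications, t-coordinate vanishes and all
  -- e/f coordinates with index j satisfying n ≤ j + s vanish.
  let P : ℕ → V n → Prop := fun s y =>
    y Bas.t = 0 ∧ ∀ j : Fin n, n ≤ (j : ℕ) + s → y (Bas.e j) = 0 ∧ y (Bas.f j) = 0
  have base : ∀ y : V n, P 1 (r y) := by
    intro y
    constructor
    · rfl
    · intro j hj
      have hlt : ¬ ((j : ℕ) + 1 < n) := by omega
      constructor
      · show lsa n α β y x (Bas.e j) = 0
        simp [lsa, hlt]
      · show lsa n α β y x (Bas.f j) = 0
        simp [lsa, hlt]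
  have step : ∀ (s : ℕ) (y : V n), P s y → P (s + 1) (r y) := by
    intro s y hy
    obtain ⟨ht, hef⟩ := hy
    constructor
    · rfl
    · intro j hj
      constructor
      · show lsa n α β y x (Bas.e j) = 0
        by_cases hlt : (j : ℕ) + 1 < n
        · have he : y (Bas.e ⟨(j : ℕ) + 1, hlt⟩) = 0 := (hef ⟨(j : ℕ) + 1, hlt⟩ (by simp; omega)).1
          simp [lsa, hlt, ht, he]
        · simp [lsa, hlt]
      · show lsa n α β y x (Bas.f j) = 0
        by_cases hlt : (j : ℕ) + 1 < n
        · have hf : y (Bas.f ⟨(j : ℕ) + 1, hlt⟩) = 0 := (hef ⟨(j : ℕ) + 1, hlt⟩ (by simp; omega)).2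
          simp [lsa, hlt, ht, hf]
        · simp [lsa, hlt]
  have iter : ∀ (s : ℕ) (y : V n), P (s + 1) (r^[s + 1] y) := by
    intro s
    induction s with
    | zero => intro y; simpa using base y
    | succ k ih =>
        intro y
        have : r^[k + 1 + 1] y = r (r^[k + 1] y) := Function.iterate_succ_apply' r (k + 1) y
        rw [this]
        exact step (k + 1) _ (ih y)
  refine ⟨n + 2, fun y => ?_⟩
  have hP : P (n + 1) (r^[n + 1] y) := iter n y
  obtain ⟨ht, hef⟩ := hP
  have : r^[n + 2] y = r (r^[n + 1] y) := Function.iterate_succ_apply' r (n + 1) y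
  show r^[n + 2] y = 0
  rw [this]
  set w := r^[n + 1] y with hw
  funext b
  have hzero : ∀ j : Fin n, w (Bas.e j) = 0 ∧ w (Bas.f j) = 0 := fun j => hef j (by omega)
  cases b with
  | z =>
      show lsa n α β w x Bas.z = 0
      simp only [lsa]
      refine Finset.sum_eq_zero fun i _ => Finset.sum_eq_zero fun j _ => ?_
      rcases hzero i with ⟨he, _⟩
      rcases hzero j with ⟨_, hf⟩
      simp [he, hf]
  | t => rfl
  | e k =>
      show lsa n α β w x (Bas.e k) = 0
      by_cases hlt : (k : ℕ) + 1 < n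
      · have he : w (Bas.e ⟨(k : ℕ) + 1, hlt⟩) = 0 := (hzero _).1
        simp [lsa, hlt, ht, he]
      · simp [lsa, hlt]
  | f k =>
      show lsa n α β w x (Bas.f k) = 0
      by_cases hlt : (k : ℕ) + 1 < n
      · have hf : w (Bas.f ⟨(k : ℕ) + 1, hlt⟩) = 0 := (hzero _).2
        simp [lsa, hlt, ht, hf]
      · simp [lsa, hlt]

end Paper
end

section
/- Suppose α_i = −β′_i and β_i = −α′_i for each i = 1, …, n−1. Then γ′_{n−i} + γ_i = 1 for each i = 1, …, n−1. -/
namespace Paper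

open Finset

theorem αseq_one (α : ℝ) : αseq α 1 = α := by
  simp [αseq]

theorem βseq_one (β : ℝ) : βseq β 1 = β := by
  simp [βseq]

/-- Under `(α, β) ↦ (-β, -α)` the common denominator of the `γ_i` is unchanged, while the
numerators of `γ'_{n-i}` and `γ_i` add up to it. -/
theorem γseq_neg_swap_sub_add_γseq {n i : ℕ} {α β : ℝ} (hi : i ≤ n)
    (hD : (n : ℝ) * (α - 1) * (β + 1) - α + β + 2 ≠ 0) :
    γseq n (-β) (-α) (n - i) + γseq n α β i = 1 := by
  have hD' : (n : ℝ) * (α - 1) * (β + 1) - (α - 1) + β + 1 ≠ 0 := by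
    contrapose! hD
    linarith
  have hdenom : (n : ℝ) * (-β - 1) * (-α + 1) - (-β - 1) + -α + 1
      = (n : ℝ) * (α - 1) * (β + 1) - (α - 1) + β + 1 := by ring
  rw [γseq, γseq, Nat.cast_sub hi, hdenom, ← add_div, div_eq_one_iff_eq hD']
  ring

theorem stmt7_general (n : ℕ) (α β α' β' : ℝ)
    (hc : Cond n α β)
    (hsym : ∀ i : ℕ, 1 ≤ i → i ≤ n - 1 → αseq α i = -βseq β' i ∧ βseq β i = -αseq α' i) :
    ∀ i : ℕ, 1 ≤ i → i ≤ n - 1 → γseq n α' β' (n - i) + γseq n α β i = 1 := by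
  intro i hi hin
  obtain ⟨hα, hβ⟩ := hsym 1 le_rfl (by omega)
  rw [αseq_one, βseq_one] at hα hβ
  obtain rfl : β' = -α := by linarith
  obtain rfl : α' = -β := by linarith
  exact γseq_neg_swap_sub_add_γseq (by omega) hc.2.2

/-- if `α_i = -β'_i` and `β_i = -α'_i` for `i = 1,…,n-1`, then
`γ'_{n-i} + γ_i = 1` for `i = 1,…,n-1`. -/
theorem stmt7 (n : ℕ) (hn : 2 ≤ n) (α β α' β' : ℝ)
    (hc : Cond n α β) (hc' : Cond n α' β')
    (hsym : ∀ i : ℕ, 1 ≤ i → i ≤ n - 1 → αseq α i = -βseq β' i ∧ βseq β i = -αseq α' i) :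
    ∀ i : ℕ, 1 ≤ i → i ≤ n - 1 → γseq n α' β' (n - i) + γseq n α β i = 1 :=
  stmt7_general n α β α' β' hc hsym

end Paper
end

section
/- For every real number λ ∉ ℤ, the bilinear form ω_λ is a symplectic structure on T*g: it is skew-symmetric, non-degenerate, and satisfies ω_λ(x,[y,z]) + ω_λ(y,[z,x]) + ω_λ(z,[x,y]) = 0 for all x, y, z ∈ T*g. -/
namespace Paper

open Finset

-- AUX START
noncomputable def eE (n : ℕ) (u : V n) (k : ℕ) : ℝ := if h : k < n then u (Bas.e ⟨k, h⟩) else 0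
noncomputable def eF (n : ℕ) (u : V n) (k : ℕ) : ℝ := if h : k < n then u (Bas.f ⟨k, h⟩) else 0

lemma eE_eq (n : ℕ) (u : V n) (k : ℕ) (h : k < n) : eE n u k = u (Bas.e ⟨k, h⟩) := dif_pos h
lemma eF_eq (n : ℕ) (u : V n) (k : ℕ) (h : k < n) : eF n u k = u (Bas.f ⟨k, h⟩) := dif_pos h

lemma bracket_e (n : ℕ) (y z : V n) (k : ℕ) (hk : k < n) :
    bracket n y z (Bas.e ⟨k, hk⟩)
      = if k + 1 < n then y Bas.t * eE n z (k+1) - eE n y (k+1) * z Bas.t else 0 := by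
  show dite _ _ _ = _
  by_cases h : k + 1 < n
  · rw [dif_pos h, if_pos h, eE_eq n z _ h, eE_eq n y _ h]
  · rw [dif_neg h, if_neg h]

lemma bracket_f (n : ℕ) (y z : V n) (k : ℕ) (hk : k < n) :
    bracket n y z (Bas.f ⟨k, hk⟩)
      = if k + 1 < n then -(y Bas.t * eF n z (k+1)) + eF n y (k+1) * z Bas.t else 0 := by
  show dite _ _ _ = _
  by_cases h : k + 1 < n
  · rw [dif_pos h, if_pos h, eF_eq n z _ h, eF_eq n y _ h]
  · rw [dif_neg h, if_neg h]

lemma eE_bracket (n : ℕ) (y z : V n) (k : ℕ) (hk : k < n) :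
    eE n (bracket n y z) k
      = if k + 1 < n then y Bas.t * eE n z (k+1) - eE n y (k+1) * z Bas.t else 0 := by
  rw [eE_eq n _ k hk, bracket_e]

lemma eF_bracket (n : ℕ) (y z : V n) (k : ℕ) (hk : k < n) :
    eF n (bracket n y z) k
      = if k + 1 < n then -(y Bas.t * eF n z (k+1)) + eF n y (k+1) * z Bas.t else 0 := by
  rw [eF_eq n _ k hk, bracket_f]

lemma bracket_z (n : ℕ) (y z : V n) :
    bracket n y z Bas.z = ∑ i ∈ Finset.range n, ∑ j ∈ Finset.range n,
      (if i + j = n then eE n y i * eF n z j - eF n y j * eE n z i else 0) := by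
  show (∑ i : Fin n, ∑ j : Fin n, _) = _
  rw [← Fin.sum_univ_eq_sum_range (fun i => ∑ j ∈ Finset.range n,
    (if i + j = n then eE n y i * eF n z j - eF n y j * eE n z i else 0)) n]
  refine Finset.sum_congr rfl fun i _ => ?_
  rw [← Fin.sum_univ_eq_sum_range (fun j =>
    (if (i:ℕ) + j = n then eE n y (i:ℕ) * eF n z j - eF n y j * eE n z (i:ℕ) else 0)) n]
  refine Finset.sum_congr rfl fun j _ => ?_
  simp [eE, eF, i.isLt, j.isLt]

lemma omega_eq (n : ℕ) (lam : ℝ) (x w : V n) :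
    omegaForm n lam x w = (x Bas.t * w Bas.z - x Bas.z * w Bas.t)
      + ∑ i ∈ Finset.range n, (lam - (i:ℝ)) *
          (eE n x i * eF n w (n-1-i) - eF n x (n-1-i) * eE n w i) := by
  unfold omegaForm
  congr 1
  rw [← Fin.sum_univ_eq_sum_range (fun i => (lam - (i:ℝ)) *
    (eE n x i * eF n w (n-1-i) - eF n x (n-1-i) * eE n w i)) n]
  refine Finset.sum_congr rfl fun i _ => ?_
  have h1 : n - 1 - (i:ℕ) < n := by have := i.isLt; omega
  simp [eE, eF, i.isLt, h1]

lemma sum_shift (n : ℕ) (F G : ℕ → ℝ) (h0 : F 0 = 0)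
    (htop : ∀ k, k + 1 = n → G k = 0)
    (hFG : ∀ k, k + 1 < n → F (k + 1) = G k) :
    ∑ i ∈ Finset.range n, F i = ∑ i ∈ Finset.range n, G i := by
  cases n with
  | zero => simp
  | succ m =>
    rw [Finset.sum_range_succ', Finset.sum_range_succ, h0, htop m rfl, add_zero, add_zero]
    exact Finset.sum_congr rfl fun k hk => hFG k (by have := Finset.mem_range.mp hk; omega)

lemma collapse (n : ℕ) (g : ℕ → ℕ → ℝ) :
    ∑ i ∈ Finset.range n, ∑ j ∈ Finset.range n, (if i + j = n then g i j else 0)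
      = ∑ i ∈ Finset.range n, (if 1 ≤ i then g i (n - i) else 0) := by
  refine Finset.sum_congr rfl fun i hi => ?_
  have hi' := Finset.mem_range.mp hi
  by_cases h : 1 ≤ i
  · rw [if_pos h, Finset.sum_eq_single (n - i)]
    · rw [if_pos (by omega)]
    · intro j _ hj
      exact if_neg (fun hc => hj (by omega))
    · intro hni
      exact absurd (Finset.mem_range.mpr (by omega)) hni
  · rw [if_neg h]
    exact Finset.sum_eq_zero fun j hj => if_neg (by have := Finset.mem_range.mp hj; omega)


lemma omega_bracket (n : ℕ) (hn : 2 ≤ n) (lam : ℝ) (x y z : V n) :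
    omegaForm n lam x (bracket n y z) = ∑ i ∈ Finset.range n,
      (if i + 1 < n then
        x Bas.t * (eE n y (i+1) * eF n z (n-1-i) - eF n y (n-1-i) * eE n z (i+1))
        + (lam - ((i:ℝ)+1)) *
            (eE n x (i+1) * (-(y Bas.t * eF n z (n-1-i)) + eF n y (n-1-i) * z Bas.t))
        - (lam - (i:ℝ)) *
            (eF n x (n-1-i) * (y Bas.t * eE n z (i+1) - eE n y (i+1) * z Bas.t))
      else 0) := by
  have hwt : bracket n y z Bas.t = 0 := rfl
  rw [omega_eq, bracket_z, hwt, mul_zero, sub_zero]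
  have hsplit : ∑ i ∈ Finset.range n, (lam - (i:ℝ)) *
      (eE n x i * eF n (bracket n y z) (n-1-i) - eF n x (n-1-i) * eE n (bracket n y z) i)
      = (∑ i ∈ Finset.range n, (lam - (i:ℝ)) * (eE n x i * eF n (bracket n y z) (n-1-i)))
        - ∑ i ∈ Finset.range n, (lam - (i:ℝ)) * (eF n x (n-1-i) * eE n (bracket n y z) i) := by
    rw [← Finset.sum_sub_distrib]
    exact Finset.sum_congr rfl fun i _ => by ring
  rw [hsplit]
  have hA : x Bas.t * (∑ i ∈ Finset.range n, ∑ j ∈ Finset.range n,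
      (if i + j = n then eE n y i * eF n z j - eF n y j * eE n z i else 0))
      = ∑ i ∈ Finset.range n, (if i + 1 < n then
          x Bas.t * (eE n y (i+1) * eF n z (n-1-i) - eF n y (n-1-i) * eE n z (i+1)) else 0) := by
    rw [collapse, Finset.mul_sum]
    refine sum_shift n _ _ (by simp) (fun k hk => if_neg (by omega)) (fun k hk => ?_)
    rw [if_pos (by omega), if_pos hk, show n - (k+1) = n - 1 - k from by omega]
  have hB1 : (∑ i ∈ Finset.range n, (lam - (i:ℝ)) * (eE n x i * eF n (bracket n y z) (n-1-i)))
      = ∑ i ∈ Finset.range n, (if i + 1 < n then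
          (lam - ((i:ℝ)+1)) *
            (eE n x (i+1) * (-(y Bas.t * eF n z (n-1-i)) + eF n y (n-1-i) * z Bas.t)) else 0) := by
    refine sum_shift n _ _ ?_ (fun k hk => if_neg (by omega)) (fun k hk => ?_)
    · rw [eF_bracket n y z (n-1-0) (by omega), if_neg (by omega), mul_zero, mul_zero]
    · rw [eF_bracket n y z (n-1-(k+1)) (by omega), if_pos (by omega), if_pos hk,
        show n - 1 - (k+1) + 1 = n - 1 - k from by omega]
      push_cast
      ring
  have hB2 : (∑ i ∈ Finset.range n, (lam - (i:ℝ)) * (eF n x (n-1-i) * eE n (bracket n y z) i))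
      = ∑ i ∈ Finset.range n, (if i + 1 < n then
          (lam - (i:ℝ)) *
            (eF n x (n-1-i) * (y Bas.t * eE n z (i+1) - eE n y (i+1) * z Bas.t)) else 0) := by
    refine Finset.sum_congr rfl fun i hi => ?_
    rw [eE_bracket n y z i (Finset.mem_range.mp hi)]
    by_cases h : i + 1 < n
    · rw [if_pos h, if_pos h]
    · rw [if_neg h, if_neg h, mul_zero, mul_zero]
  rw [hA, hB1, hB2, ← Finset.sum_sub_distrib, ← Finset.sum_add_distrib]
  refine Finset.sum_congr rfl fun i _ => ?_
  by_cases h : i + 1 < n <;> simp [h] <;> ring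


lemma closed (n : ℕ) (hn : 2 ≤ n) (lam : ℝ) (x y z : V n) :
    omegaForm n lam x (bracket n y z) + omegaForm n lam y (bracket n z x)
      + omegaForm n lam z (bracket n x y) = 0 := by
  rw [omega_bracket n hn lam x y z, omega_bracket n hn lam y z x, omega_bracket n hn lam z x y,
    ← Finset.sum_add_distrib, ← Finset.sum_add_distrib]
  refine Finset.sum_eq_zero fun i _ => ?_
  by_cases h : i + 1 < n
  · rw [if_pos h, if_pos h, if_pos h]; ring
  · rw [if_neg h, if_neg h, if_neg h]; ring

lemma skew (n : ℕ) (lam : ℝ) (x y : V n) :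
    omegaForm n lam x y = -omegaForm n lam y x := by
  unfold omegaForm
  rw [neg_add, ← Finset.sum_neg_distrib]
  congr 1
  · ring
  · exact Finset.sum_congr rfl fun i _ => by ring

lemma omega_bas_t (n : ℕ) (lam : ℝ) (x : V n) :
    omegaForm n lam x (bas n Bas.t) = -(x Bas.z) := by
  unfold omegaForm bas
  rw [Finset.sum_eq_zero, add_zero]
  · simp [Pi.single_apply]
  · intro i _; simp [Pi.single_apply]

lemma omega_bas_z (n : ℕ) (lam : ℝ) (x : V n) :
    omegaForm n lam x (bas n Bas.z) = x Bas.t := by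
  unfold omegaForm bas
  rw [Finset.sum_eq_zero, add_zero]
  · simp [Pi.single_apply]
  · intro i _; simp [Pi.single_apply]

lemma omega_bas_f (n : ℕ) (lam : ℝ) (x : V n) (m : ℕ) (hm : m < n) (h1 : 1 ≤ n) :
    omegaForm n lam x (bas n (Bas.f ⟨m, hm⟩))
      = (lam - ((n-1-m : ℕ) : ℝ)) * x (Bas.e ⟨n-1-m, by omega⟩) := by
  unfold omegaForm bas
  rw [Finset.sum_eq_single (⟨n-1-m, by omega⟩ : Fin n)]
  · have he : (Bas.f (⟨n - 1 - ((⟨n-1-m, by omega⟩ : Fin n) : ℕ), by omega⟩ : Fin n))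
        = Bas.f (⟨m, hm⟩ : Fin n) := by
      congr 1
      exact Fin.ext (by show n - 1 - (n-1-m) = m; omega)
    rw [he]
    simp [Pi.single_apply]
  · intro j _ hj
    have hj' : n - 1 - (j:ℕ) ≠ m := by
      intro hc
      exact hj (Fin.ext (by show (j:ℕ) = n - 1 - m; have := j.isLt; omega))
    simp [Pi.single_apply, Fin.ext_iff, hj']
  · intro hni; exact absurd (Finset.mem_univ _) hni

lemma omega_bas_e (n : ℕ) (lam : ℝ) (x : V n) (k : Fin n) :
    omegaForm n lam x (bas n (Bas.e k))
      = -((lam - ((k:ℕ) : ℝ)) * x (Bas.f ⟨n-1-(k:ℕ), by have := k.isLt; omega⟩)) := by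
  unfold omegaForm bas
  rw [Finset.sum_eq_single k]
  · simp [Pi.single_apply]
  · intro j _ hj
    simp [Pi.single_apply, hj]
  · intro hni; exact absurd (Finset.mem_univ _) hni

lemma nondeg (n : ℕ) (hn : 2 ≤ n) (lam : ℝ) (hlam : ∀ m : ℤ, lam ≠ (m : ℝ)) :
    ∀ x : V n, (∀ y : V n, omegaForm n lam x y = 0) → x = 0 := by
  intro x hx
  have hfac : ∀ m : ℕ, lam - (m : ℝ) ≠ 0 := by
    intro m hc
    exact hlam m (by push_cast; linarith)
  funext b
  cases b with
  | z =>
    have := hx (bas n Bas.t)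
    rw [omega_bas_t] at this
    show x Bas.z = 0
    linarith
  | t =>
    have := hx (bas n Bas.z)
    rw [omega_bas_z] at this
    exact this
  | e i =>
    have hi := i.isLt
    have := hx (bas n (Bas.f ⟨n-1-(i:ℕ), by omega⟩))
    rw [omega_bas_f n lam x (n-1-(i:ℕ)) (by omega) (by omega)] at this
    have hq : n - 1 - (n - 1 - (i:ℕ)) = (i:ℕ) := by omega
    simp only [hq] at this
    show x (Bas.e i) = 0
    have := (mul_eq_zero.mp this).resolve_left (hfac (i:ℕ))
    simpa using this
  | f j =>
    have hj := j.isLt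
    have := hx (bas n (Bas.e ⟨n-1-(j:ℕ), by omega⟩))
    rw [omega_bas_e n lam x ⟨n-1-(j:ℕ), by omega⟩] at this
    have hq : n - 1 - ((⟨n-1-(j:ℕ), by omega⟩ : Fin n) : ℕ) = (j:ℕ) := by
      show n - 1 - (n - 1 - (j:ℕ)) = (j:ℕ); omega
    simp only [hq] at this
    rw [neg_eq_zero] at this
    show x (Bas.f j) = 0
    have := (mul_eq_zero.mp this).resolve_left (hfac (n-1-(j:ℕ)))
    simpa using this

/-- for `λ ∉ ℤ`, the form `ω_λ` is a symplectic structure on `T*g`: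
skew-symmetric, non-degenerate, and closed. -/
theorem stmt14 (n : ℕ) (hn : 2 ≤ n) (lam : ℝ) (hlam : ∀ m : ℤ, lam ≠ (m : ℝ)) :
    (∀ x y : V n, omegaForm n lam x y = -omegaForm n lam y x) ∧
    (∀ x : V n, (∀ y : V n, omegaForm n lam x y = 0) → x = 0) ∧
    (∀ x y z : V n,
      omegaForm n lam x (bracket n y z) + omegaForm n lam y (bracket n z x)
        + omegaForm n lam z (bracket n x y) = 0) :=
  ⟨fun x y => skew n lam x y, nondeg n hn lam hlam, fun x y z => closed n hn lam x y z⟩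

end Paper
end

section
/- Let λ, λ′ ∉ ℤ satisfy λ + λ′ = n − 1. Then the linear map φ : T*g → T*g defined on the basis by φ(t) = t, φ(z) = (−1)^n z, φ(e_i) = (−1)^{n−i+1} f_i, and φ(f_i) = (−1)^{n−i} e_i for i = 1, …, n, is a Lie algebra automorphism of T*g and satisfies ω_{λ′}(φ(x), φ(y)) = (−1)^n ω_λ(x, y) for all x, y ∈ T*g; hence ω_λ and ω_{λ′} are symplectomorphic up to homothety. -/
namespace Paper

open Finset

/-- The linear map `φ : T*g → T*g` with `φ(z) = (-1)^n z`, `φ(e_j) = (-1)^{n-j+1} f_j`,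
`φ(f_j) = (-1)^{n-j} e_j` (math indexing `j = 1,…,n`) and `φ(t) = t`, written in
coordinates. -/
noncomputable def phiMap (n : ℕ) (x : V n) : V n := fun b =>
  match b with
  | Bas.z => (-1 : ℝ) ^ n * x Bas.z
  | Bas.t => x Bas.t
  | Bas.e j => (-1 : ℝ) ^ (n - (j : ℕ) - 1) * x (Bas.f j)
  | Bas.f j => (-1 : ℝ) ^ (n - (j : ℕ)) * x (Bas.e j)

/-- Inverse of `phiMap`. -/
noncomputable def psiMap (n : ℕ) (x : V n) : V n := fun b =>
  match b with
  | Bas.z => (-1 : ℝ) ^ n * x Bas.z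
  | Bas.t => x Bas.t
  | Bas.e j => (-1 : ℝ) ^ (n - (j : ℕ)) * x (Bas.f j)
  | Bas.f j => (-1 : ℝ) ^ (n - (j : ℕ) - 1) * x (Bas.e j)

lemma neg_one_pow_mul_self (m : ℕ) : ((-1 : ℝ) ^ m) * (-1 : ℝ) ^ m = 1 := by
  rw [← pow_add]
  exact Even.neg_one_pow ⟨m, rfl⟩

lemma psi_phi (n : ℕ) (x : V n) : psiMap n (phiMap n x) = x := by
  funext b
  cases b <;>
    simp only [psiMap, phiMap, ← mul_assoc, neg_one_pow_mul_self, one_mul]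

lemma phi_psi (n : ℕ) (x : V n) : phiMap n (psiMap n x) = x := by
  funext b
  cases b <;>
    simp only [psiMap, phiMap, ← mul_assoc, neg_one_pow_mul_self, one_mul]

lemma phi_linear (n : ℕ) (c : ℝ) (x y : V n) :
    phiMap n (c • x + y) = c • phiMap n x + phiMap n y := by
  funext b
  cases b <;>
    simp only [phiMap, Pi.add_apply, Pi.smul_apply, smul_eq_mul] <;> ring

lemma phi_bracket (n : ℕ) (hn : 2 ≤ n) (x y : V n) :
    phiMap n (bracket n x y) = bracket n (phiMap n x) (phiMap n y) := by
  funext b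
  cases b with
  | t => simp [phiMap, bracket]
  | e k =>
    simp only [phiMap, bracket]
    by_cases h : (k : ℕ) + 1 < n
    · rw [dif_pos h, dif_pos h]
      have h1 : n - (k : ℕ) - 1 = (n - ((k : ℕ) + 1) - 1) + 1 := by omega
      rw [h1, pow_succ]
      ring
    · rw [dif_neg h, dif_neg h, mul_zero]
  | f k =>
    simp only [phiMap, bracket]
    by_cases h : (k : ℕ) + 1 < n
    · rw [dif_pos h, dif_pos h]
      have h1 : n - (k : ℕ) = (n - ((k : ℕ) + 1)) + 1 := by omega
      rw [h1, pow_succ]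
      ring
    · rw [dif_neg h, dif_neg h, mul_zero]
  | z =>
    simp only [phiMap, bracket, Finset.mul_sum]
    rw [Finset.sum_comm]
    refine Finset.sum_congr rfl fun i _ => Finset.sum_congr rfl fun j _ => ?_
    by_cases hij : (i : ℕ) + (j : ℕ) = n
    · have hji : (j : ℕ) + (i : ℕ) = n := by omega
      rw [if_pos hij, if_pos hji]
      have hs : (-1 : ℝ) ^ (n - (i : ℕ) - 1) * (-1 : ℝ) ^ (n - (j : ℕ)) =
          (-1 : ℝ) ^ (n - 1) := by
        rw [← pow_add]
        congr 1
        have := i.isLt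
        have := j.isLt
        omega
      have hnn : (-1 : ℝ) ^ n = (-1 : ℝ) ^ (n - 1) * (-1 : ℝ) := by
        rw [← pow_succ]
        congr 1
        omega
      calc (-1 : ℝ) ^ n * (x (Bas.e j) * y (Bas.f i) - x (Bas.f i) * y (Bas.e j))
          = ((-1 : ℝ) ^ (n - (i : ℕ) - 1) * (-1 : ℝ) ^ (n - (j : ℕ))) *
            (x (Bas.f i) * y (Bas.e j) - x (Bas.e j) * y (Bas.f i)) := by
            rw [hs, hnn]; ring
        _ = (-1 : ℝ) ^ (n - (i : ℕ) - 1) * x (Bas.f i) *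
              ((-1 : ℝ) ^ (n - (j : ℕ)) * y (Bas.e j)) -
            (-1 : ℝ) ^ (n - (j : ℕ)) * x (Bas.e j) *
              ((-1 : ℝ) ^ (n - (i : ℕ) - 1) * y (Bas.f i)) := by ring
    · have hji : ¬ (j : ℕ) + (i : ℕ) = n := by omega
      rw [if_neg hij, if_neg hji, mul_zero]

lemma phi_omega (n : ℕ) (hn : 2 ≤ n) (lam lam' : ℝ)
    (hsum : lam + lam' = (n : ℝ) - 1) (x y : V n) :
    omegaForm n lam' (phiMap n x) (phiMap n y) = (-1 : ℝ) ^ n * omegaForm n lam x y := by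
  simp only [omegaForm, phiMap, mul_add, Finset.mul_sum]
  have hsum2 : ∀ i : Fin n,
      (-1 : ℝ) ^ n * ((lam - ((i : ℕ) : ℝ)) *
        (x (Bas.e i) * y (Bas.f ⟨n - 1 - (i : ℕ), by have := i.isLt; omega⟩)
          - x (Bas.f ⟨n - 1 - (i : ℕ), by have := i.isLt; omega⟩) * y (Bas.e i)))
      = (lam' - (((i.rev : Fin n) : ℕ) : ℝ)) *
        ((-1 : ℝ) ^ (n - ((i.rev : Fin n) : ℕ) - 1) * x (Bas.f i.rev) *
          ((-1 : ℝ) ^ (n - (((⟨n - 1 - ((i.rev : Fin n) : ℕ), by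
              have := (i.rev : Fin n).isLt; omega⟩ : Fin n) : Fin n) : ℕ)) *
            y (Bas.e (⟨n - 1 - ((i.rev : Fin n) : ℕ), by
              have := (i.rev : Fin n).isLt; omega⟩ : Fin n)))
          - (-1 : ℝ) ^ (n - (((⟨n - 1 - ((i.rev : Fin n) : ℕ), by
              have := (i.rev : Fin n).isLt; omega⟩ : Fin n) : Fin n) : ℕ)) *
            x (Bas.e (⟨n - 1 - ((i.rev : Fin n) : ℕ), by
              have := (i.rev : Fin n).isLt; omega⟩ : Fin n)) *
            ((-1 : ℝ) ^ (n - ((i.rev : Fin n) : ℕ) - 1) * y (Bas.f i.rev))) := by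
    intro i
    have hrev : ((i.rev : Fin n) : ℕ) = n - 1 - (i : ℕ) := by
      simp [Fin.val_rev]
      omega
    have hi := i.isLt
    have hdouble : (⟨n - 1 - ((i.rev : Fin n) : ℕ), by
        have := (i.rev : Fin n).isLt; omega⟩ : Fin n) = i := by
      apply Fin.ext
      simp only [hrev]
      omega
    rw [hdouble]
    have hrevfin : (Bas.f (i.rev) : Bas n) =
        Bas.f (⟨n - 1 - (i : ℕ), by omega⟩ : Fin n) := by
      congr 1
      apply Fin.ext
      exact hrev
    rw [hrevfin]
    simp only [hrev]
    have hlam2 : lam' - ((n - 1 - (i : ℕ) : ℕ) : ℝ) = -(lam - ((i : ℕ) : ℝ)) := by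
      have : ((n - 1 - (i : ℕ) : ℕ) : ℝ) = (n : ℝ) - 1 - ((i : ℕ) : ℝ) := by
        push_cast [Nat.cast_sub (by omega : (i : ℕ) ≤ n - 1),
          Nat.cast_sub (by omega : 1 ≤ n)]
        ring
      rw [this]
      linarith
    rw [hlam2]
    have hs : (-1 : ℝ) ^ (n - (n - 1 - (i : ℕ)) - 1) * (-1 : ℝ) ^ (n - (i : ℕ)) =
        (-1 : ℝ) ^ n := by
      rw [← pow_add]
      congr 1
      omega
    calc (-1 : ℝ) ^ n * ((lam - ((i : ℕ) : ℝ)) *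
          (x (Bas.e i) * y (Bas.f ⟨n - 1 - (i : ℕ), by omega⟩)
            - x (Bas.f ⟨n - 1 - (i : ℕ), by omega⟩) * y (Bas.e i)))
        = ((-1 : ℝ) ^ (n - (n - 1 - (i : ℕ)) - 1) * (-1 : ℝ) ^ (n - (i : ℕ))) *
          (-(lam - ((i : ℕ) : ℝ)) *
            (x (Bas.f ⟨n - 1 - (i : ℕ), by omega⟩) * y (Bas.e i)
              - x (Bas.e i) * y (Bas.f ⟨n - 1 - (i : ℕ), by omega⟩))) := by
          rw [hs]; ring
      _ = -(lam - ((i : ℕ) : ℝ)) *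
          ((-1 : ℝ) ^ (n - (n - 1 - (i : ℕ)) - 1) * x (Bas.f ⟨n - 1 - (i : ℕ), by omega⟩) *
            ((-1 : ℝ) ^ (n - (i : ℕ)) * y (Bas.e i))
            - (-1 : ℝ) ^ (n - (i : ℕ)) * x (Bas.e i) *
              ((-1 : ℝ) ^ (n - (n - 1 - (i : ℕ)) - 1) *
                y (Bas.f ⟨n - 1 - (i : ℕ), by omega⟩))) := by ring
  have key : ∑ i : Fin n, (-1 : ℝ) ^ n * ((lam - ((i : ℕ) : ℝ)) *
        (x (Bas.e i) * y (Bas.f ⟨n - 1 - (i : ℕ), by have := i.isLt; omega⟩)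
          - x (Bas.f ⟨n - 1 - (i : ℕ), by have := i.isLt; omega⟩) * y (Bas.e i)))
      = ∑ i : Fin n, (lam' - ((i : ℕ) : ℝ)) *
        ((-1 : ℝ) ^ (n - (i : ℕ) - 1) * x (Bas.f i) *
          ((-1 : ℝ) ^ (n - (⟨n - 1 - (i : ℕ), by have := i.isLt; omega⟩ : Fin n)) *
            y (Bas.e ⟨n - 1 - (i : ℕ), by have := i.isLt; omega⟩))
          - (-1 : ℝ) ^ (n - (⟨n - 1 - (i : ℕ), by have := i.isLt; omega⟩ : Fin n)) *
            x (Bas.e ⟨n - 1 - (i : ℕ), by have := i.isLt; omega⟩) *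
            ((-1 : ℝ) ^ (n - (i : ℕ) - 1) * y (Bas.f i))) := by
    exact Fintype.sum_bijective Fin.rev Fin.rev_involutive.bijective _ _ hsum2
  rw [← key]
  ring

/-- if `λ + λ' = n - 1` (with `λ, λ' ∉ ℤ`), the map `φ` with
`φ(t) = t`, `φ(z) = (-1)^n z`, `φ(e_i) = (-1)^{n-i+1} f_i`, `φ(f_i) = (-1)^{n-i} e_i`
is a Lie algebra automorphism of `T*g` with `ω_{λ'}(φx, φy) = (-1)^n ω_λ(x,y)`;
hence `ω_λ` and `ω_{λ'}` are symplectomorphic up to homothety. -/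
theorem stmt19 (n : ℕ) (hn : 2 ≤ n) (lam lam' : ℝ)
    (hlam : ∀ m : ℤ, lam ≠ (m : ℝ)) (hlam' : ∀ m : ℤ, lam' ≠ (m : ℝ))
    (hsum : lam + lam' = (n : ℝ) - 1) :
    (∀ (c : ℝ) (x y : V n), phiMap n (c • x + y) = c • phiMap n x + phiMap n y) ∧
    Function.Bijective (phiMap n) ∧
    (∀ x y, phiMap n (bracket n x y) = bracket n (phiMap n x) (phiMap n y)) ∧
    (∀ x y : V n,
      omegaForm n lam' (phiMap n x) (phiMap n y) = (-1 : ℝ) ^ n * omegaForm n lam x y) ∧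
    SympIso n (omegaForm n lam) (omegaForm n lam') := by
  refine ⟨phi_linear n, ?_, phi_bracket n hn, phi_omega n hn lam lam' hsum, ?_⟩
  · exact Function.bijective_iff_has_inverse.mpr
      ⟨psiMap n, psi_phi n, phi_psi n⟩
  · refine ⟨{ toFun := phiMap n
              invFun := psiMap n
              left_inv := psi_phi n
              right_inv := phi_psi n
              map_add' := fun x y => by
                have := phi_linear n 1 x y
                simpa using this
              map_smul' := fun c x => by
                have := phi_linear n c x 0
                simp only [add_zero] at this
                have h0 : phiMap n (0 : V n) = 0 := by
                  funext b; cases b <;> simp [phiMap]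
                show phiMap n (c • x) = c • phiMap n x
                rw [this, h0, add_zero] },
      phi_bracket n hn, (-1 : ℝ) ^ n, ?_, ?_⟩
    · exact pow_ne_zero n (by norm_num)
    · intro x y
      exact phi_omega n hn lam lam' hsum x y

end Paper
end
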